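/- arXiv:2007.07475 — 2 statements merged into one kernel-verified Lean document; each statement's English description precedes it below -/
import Mathlib

section
/- (2^r-lifting of a 2-PDA) If there exists a 2-regular (K_b, f_b, Z_b, S_b) PDA, then for every integer r ≥ 1 there exists a 2^r-regular PDA with parameters (2^r K_b, 2^r f_b, (2^r − r − 1) f_b + r Z_b, (2 + 2r)|S_b| + K_b Z_b). -/
open Finset

/-- Number of stars (`none`) in column `k` of the array `P`. -/
def colStars {f K : ℕ} (P : Fin f → Fin K → Option ℕ) (k : Fin K) : ℕ :=
  (Finset.univ.filter fun j => P j k = none).card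

/-- `P` is a `(K, f, Z, S)` placement delivery array: an `f × K` array over `{∗} ∪ S`
(`none` encodes `∗`) with exactly `Z` stars in each column, every integer of `S`
occurring at least once (and all integer entries lying in `S`), satisfying the
Blackburn property. -/
def IsPDA {f K : ℕ} (P : Fin f → Fin K → Option ℕ) (Z : ℕ) (S : Finset ℕ) : Prop :=
  (∀ k, colStars P k = Z) ∧
  (∀ s ∈ S, ∃ j k, P j k = some s) ∧
  (∀ j k s, P j k = some s → s ∈ S) ∧
  (∀ j₁ k₁ j₂ k₂ s, (j₁, k₁) ≠ (j₂, k₂) →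
    P j₁ k₁ = some s → P j₂ k₂ = some s → P j₁ k₂ = none ∧ P j₂ k₁ = none)

/-- Every integer of `S` appears exactly `g` times in the array `P`. -/
def IsRegularPDA {f K : ℕ} (P : Fin f → Fin K → Option ℕ) (S : Finset ℕ) (g : ℕ) : Prop :=
  ∀ s ∈ S, ((Finset.univ : Finset (Fin f × Fin K)).filter
    (fun jk => P jk.1 jk.2 = some s)).card = g

/-- `P₀` and `P₁` are Blackburn-compatible with respect to `Pstar`. -/
def BBCompat {n m : ℕ} (P₀ P₁ Pstar : Fin n → Fin m → Option ℕ) : Prop :=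
  ∀ i₀ j₀ i₁ j₁ s, P₀ i₀ j₀ = some s → P₁ i₁ j₁ = some s →
    Pstar i₀ j₁ = none ∧ Pstar i₁ j₀ = none

/-- `Ig n t` is the `n × n` array with the integer `t` on the main diagonal and `∗`
elsewhere. -/
def Ig (n t : ℕ) : Fin n → Fin n → Option ℕ := fun i j => if i = j then some t else none

/-- Block-row index of a global index for an array built from `a × a` grids of `b`-sized
blocks. -/
def blkIdx {a b : ℕ} (j : Fin (a * b)) : Fin a :=
  ⟨(j : ℕ) / b, Nat.div_lt_of_lt_mul (Nat.mul_comm a b ▸ j.isLt)⟩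

/-- Within-block index of a global index. -/
def inIdx {a b : ℕ} (j : Fin (a * b)) : Fin b :=
  ⟨(j : ℕ) % b, Nat.mod_lt _ (by
    rcases Nat.eq_zero_or_pos b with h | h
    · exact absurd j.isLt (by simp [h])
    · exact h)⟩

namespace S18
variable (r : ℕ)

abbrev V (r : ℕ) := Fin r → ZMod 2

def vec : Fin (r+1) → V r := Fin.cases 0 (fun k => Pi.single k 1)
def uf : Fin (r+1) → V r := Fin.cases 1 (fun k => Pi.single k 1)
def dot (u v : V r) : ZMod 2 := ∑ k, u k * v k
def eps (c : Fin (r+1)) : ZMod 2 := 1 + dot r (uf r c) (vec r c)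

variable (r : ℕ)



lemma single_ne_zero (k : Fin r) : (Pi.single k 1 : V r) ≠ 0 := by
  intro h
  have := congrFun h k
  simp [Pi.single_eq_same] at this

lemma vec_inj : Function.Injective (vec r) := by
  intro c c' h
  induction c using Fin.cases with
  | zero =>
    induction c' using Fin.cases with
    | zero => rfl
    | succ k => exact absurd (congrFun h.symm k).symm (by simp [vec, Pi.single_eq_same])
  | succ k =>
    induction c' using Fin.cases with
    | zero => exact absurd (congrFun h k) (by simp [vec, Pi.single_eq_same])
    | succ l =>
      simp only [vec, Fin.cases_succ] at h
      by_contra hne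
      have hkl : k ≠ l := fun e => hne (by rw [e])
      have := congrFun h k
      simp [Pi.single_eq_same, Pi.single_eq_of_ne hkl] at this

lemma dot_add_right (u v w : V r) : dot r u (v + w) = dot r u v + dot r u w := by
  simp [dot, mul_add, Finset.sum_add_distrib]

lemma dot_one (w : V r) : dot r 1 w = ∑ k, w k := by simp [dot]

lemma dot_single (k : Fin r) (w : V r) : dot r (Pi.single k 1) w = w k := by
  rw [dot, Finset.sum_eq_single k]
  · simp [Pi.single_eq_same]
  · intro l _ hl; simp [Pi.single_eq_of_ne hl]
  · simp

lemma dot_uf_vec (c c' : Fin (r+1)) :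
    dot r (uf r c) (vec r c') =
      if c' = 0 then 0 else if c = 0 ∨ c = c' then 1 else 0 := by
  induction c using Fin.cases with
  | zero =>
    induction c' using Fin.cases with
    | zero => simp [uf, vec, dot]
    | succ l =>
      simp only [uf, vec, Fin.cases_zero, Fin.cases_succ, dot_one]
      rw [Finset.sum_eq_single l]
      · simp [Pi.single_eq_same, Fin.succ_ne_zero]
      · intro b _ hb; simp [Pi.single_eq_of_ne hb]
      · simp
  | succ k =>
    induction c' using Fin.cases with
    | zero => simp [uf, vec, Fin.cases_succ, dot, Fin.succ_ne_zero]
    | succ l =>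
      simp only [uf, vec, Fin.cases_succ, dot_single]
      rcases eq_or_ne k l with h | h
      · subst h; simp [Pi.single_eq_same, Fin.succ_ne_zero]
      · have : (k.succ : Fin (r+1)) ≠ l.succ := by
          simpa using fun e => h (Fin.succ_injective r e)
        simp [Pi.single_eq_of_ne h, Fin.succ_ne_zero, this, (Fin.succ_injective r).ne h]

lemma dot_uf_vec_self_add (c c' : Fin (r+1)) (h : c ≠ c') :
    dot r (uf r c) (vec r c + vec r c') = 1 := by
  rw [dot_add_right, dot_uf_vec, dot_uf_vec]
  rcases eq_or_ne c 0 with h0 | h0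
  · subst h0
    simp [h.symm]
  · rcases eq_or_ne c' 0 with h0' | h0'
    · simp [h0, h0']
    · simp [h0, h0', Ne.symm h, h]

lemma uf_ne_zero (hr : 1 ≤ r) (c : Fin (r+1)) : uf r c ≠ 0 := by
  induction c using Fin.cases with
  | zero =>
    intro h
    have := congrFun h ⟨0, hr⟩
    simp at this
    exact one_ne_zero this
  | succ k => exact single_ne_zero r k


lemma zmod2_add_self : ∀ a : ZMod 2, a + a = 0 := by decide
lemma v_add_self (v : V r) : v + v = 0 := by
  funext k; exact zmod2_add_self _

noncomputable def clsIdx (w : V r) : Option (Fin (r+1)) :=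
  if h : ∃ c, vec r c = w then some h.choose else none

lemma clsIdx_vec (c : Fin (r+1)) : clsIdx r (vec r c) = some c := by
  rw [clsIdx, dif_pos ⟨c, rfl⟩]
  exact congrArg some (vec_inj r (⟨c, rfl⟩ : ∃ c', vec r c' = vec r c).choose_spec)

lemma clsIdx_eq_some {w : V r} {c : Fin (r+1)} (h : clsIdx r w = some c) : vec r c = w := by
  by_cases h' : ∃ c, vec r c = w
  · rw [clsIdx, dif_pos h'] at h
    obtain rfl : h'.choose = c := by exact_mod_cast Option.some_injective _ h
    exact h'.choose_spec
  · rw [clsIdx, dif_neg h'] at h; exact absurd h (by simp)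

lemma clsIdx_eq_none {w : V r} : clsIdx r w = none ↔ ∀ c, vec r c ≠ w := by
  constructor
  · intro h c hc; rw [← hc, clsIdx_vec] at h; cases h
  · intro h; rw [clsIdx, dif_neg (by rintro ⟨c, hc⟩; exact h c hc)]

noncomputable def Arr (δ : ZMod 2) (i j : V r) : Option (Fin (r+1) × ZMod 2) :=
  (clsIdx r (i + j)).map fun c => (c, dot r (uf r c) i + δ * eps r c)

lemma Arr_eq_some {δ : ZMod 2} {i j : V r} {c : Fin (r+1)} {b : ZMod 2} :
    Arr r δ i j = some (c, b) ↔ i + j = vec r c ∧ b = dot r (uf r c) i + δ * eps r c := by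
  rw [Arr]
  constructor
  · intro h
    rcases Option.map_eq_some_iff.mp h with ⟨c', hc', he⟩
    have h1 : c' = c := congrArg Prod.fst he
    subst h1
    have h2 : dot r (uf r c') i + δ * eps r c' = b := congrArg Prod.snd he
    exact ⟨(clsIdx_eq_some r hc').symm, h2.symm⟩
  · rintro ⟨h1, rfl⟩
    rw [h1, clsIdx_vec]; rfl

lemma Arr_eq_none {δ : ZMod 2} {i j : V r} :
    Arr r δ i j = none ↔ ∀ c, vec r c ≠ i + j := by
  rw [Arr, Option.map_eq_none_iff, clsIdx_eq_none]

lemma Arr_some_j {δ : ZMod 2} {i j : V r} {c b} (h : Arr r δ i j = some (c, b)) :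
    j = i + vec r c := by
  have h1 := ((Arr_eq_some r).mp h).1
  have := congrArg (i + ·) h1
  simpa [← add_assoc, v_add_self] using this

lemma not_class {c : Fin (r+1)} {w : V r} (h0 : dot r (uf r c) w = 0) (hw : w ≠ 0) :
    ∀ c', vec r c' ≠ w + vec r c := by
  intro c' h
  have hsum : vec r c + vec r c' = w := by
    rw [h]
    rw [show vec r c + (w + vec r c) = w + (vec r c + vec r c) by abel, v_add_self, add_zero]
  rcases eq_or_ne c' c with rfl | hcc
  · rw [v_add_self] at hsum; exact hw hsum.symm
  · have h1 := dot_uf_vec_self_add r c c' (Ne.symm hcc)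
    rw [hsum, h0] at h1
    exact one_ne_zero h1.symm

/-- Blackburn within one array (conclusion for any δ'). -/
lemma Arr_blackburn {δ δ' δ'' : ZMod 2} {i0 j0 i1 j1 : V r} {c b}
    (h0 : Arr r δ i0 j0 = some (c, b)) (h1 : Arr r δ i1 j1 = some (c, b))
    (hne : (i0, j0) ≠ (i1, j1)) :
    Arr r δ' i0 j1 = none ∧ Arr r δ'' i1 j0 = none := by
  obtain ⟨hc0, hb0⟩ := (Arr_eq_some r).mp h0
  obtain ⟨hc1, hb1⟩ := (Arr_eq_some r).mp h1
  have hjj0 : j0 = i0 + vec r c := Arr_some_j r h0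
  have hjj1 : j1 = i1 + vec r c := Arr_some_j r h1
  have hii : i0 ≠ i1 := by
    rintro rfl
    exact hne (by rw [hjj0, hjj1])
  have hw : i0 + i1 ≠ 0 := by
    intro h
    have := congrArg (i0 + ·) h
    simp only [← add_assoc, v_add_self, zero_add, add_zero] at this
    exact hii this.symm
  have hdote : dot r (uf r c) i0 = dot r (uf r c) i1 := by
    have h2 := hb0.symm.trans hb1
    have := congrArg (· + δ * eps r c) h2
    simpa [add_assoc, zmod2_add_self] using this
  have hdot : dot r (uf r c) (i0 + i1) = 0 := by
    rw [dot_add_right, hdote, zmod2_add_self]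
  constructor
  · rw [Arr_eq_none]
    have : i0 + j1 = (i0 + i1) + vec r c := by rw [hjj1]; abel
    rw [this]
    exact not_class r hdot hw
  · rw [Arr_eq_none]
    have : i1 + j0 = (i0 + i1) + vec r c := by rw [hjj0]; abel
    rw [this]
    exact not_class r hdot hw

lemma zaux : ∀ a d δ : ZMod 2, a + δ * (1 + d) = a + d + (δ + 1) * (1 + d) → False := by decide

/-- Blackburn compatibility between the two companion arrays. -/
lemma Arr_cross {δ δ' : ZMod 2} (hdd : δ' = δ + 1) {i0 j0 i1 j1 : V r} {c b}
    (h0 : Arr r δ i0 j0 = some (c, b)) (h1 : Arr r δ' i1 j1 = some (c, b)) :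
    i0 ≠ j1 ∧ i1 ≠ j0 := by
  obtain ⟨hc0, hb0⟩ := (Arr_eq_some r).mp h0
  obtain ⟨hc1, hb1⟩ := (Arr_eq_some r).mp h1
  have hjj0 : j0 = i0 + vec r c := Arr_some_j r h0
  have hjj1 : j1 = i1 + vec r c := Arr_some_j r h1
  have key : i1 ≠ i0 + vec r c := by
    intro h
    have hd1 : dot r (uf r c) i1 = dot r (uf r c) i0 + dot r (uf r c) (vec r c) := by
      rw [h, dot_add_right]
    have heq := hb0.symm.trans hb1
    rw [hd1, hdd] at heq
    rw [eps] at heq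
    exact zaux _ _ _ heq
  constructor
  · intro h
    apply key
    rw [← h] at hjj1
    have := congrArg (· + vec r c) hjj1
    simp only [add_assoc, v_add_self, add_zero] at this
    exact this.symm
  · intro h
    apply key
    rw [← h] at hjj0
    exact hjj0


lemma dot_single_right (u : V r) (k : Fin r) : dot r u (Pi.single k 1) = u k := by
  rw [dot, Finset.sum_eq_single k]
  · simp [Pi.single_eq_same]
  · intro l _ hl; simp [Pi.single_eq_of_ne hl]
  · simp

lemma card_V : Fintype.card (V r) = 2 ^ r := by
  simp [V]

open Classical in
lemma card_filter_equiv {α β : Type*} [Fintype α] [Fintype β] (e : β ≃ α) (p : α → Prop)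
    [DecidablePred p] :
    (univ.filter p).card = (univ.filter fun b => p (e b)).card := by
  classical
  rw [Finset.card_filter, Finset.card_filter]
  exact (Equiv.sum_comp e fun a => if p a then 1 else 0).symm

open Classical in
lemma fiber_card (hr : 1 ≤ r) {u : V r} (hu : u ≠ 0) (b : ZMod 2) :
    (univ.filter fun v : V r => dot r u v = b).card = 2 ^ (r - 1) := by
  classical
  obtain ⟨k, hk⟩ : ∃ k, u k ≠ 0 := by
    by_contra h
    push_neg at h
    exact hu (funext fun k => h k)
  have hk1 : u k = 1 := by
    revert hk; generalize u k = a; revert a; decide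
  have key : ∀ b' : ZMod 2, (univ.filter fun v : V r => dot r u v = b').card =
      (univ.filter fun v : V r => dot r u v = b' + 1).card := by
    intro b'
    apply Finset.card_bij' (fun v _ => v + Pi.single k 1) (fun v _ => v + Pi.single k 1)
    · intro v _; rw [add_assoc, v_add_self, add_zero]
    · intro v _; rw [add_assoc, v_add_self, add_zero]
    · intro v hv
      simp only [mem_filter, mem_univ, true_and] at hv ⊢
      rw [dot_add_right, hv, dot_single_right, hk1]
    · intro v hv
      simp only [mem_filter, mem_univ, true_and] at hv ⊢
      rw [dot_add_right, hv, dot_single_right, hk1]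
      generalize b' = x; revert x; decide
  have hsplit : (univ.filter fun v : V r => dot r u v = b).card +
      (univ.filter fun v : V r => dot r u v = b + 1).card = 2 ^ r := by
    rw [← card_V r]
    have : (univ.filter fun v : V r => dot r u v = b + 1) =
        (univ.filter fun v : V r => ¬ dot r u v = b) := by
      apply Finset.filter_congr
      intro v _
      generalize dot r u v = x
      revert x; generalize b = y; revert y; decide
    rw [this, Finset.card_filter_add_card_filter_not, Finset.card_univ]
  have h2 : 2 ^ r = 2 * 2 ^ (r - 1) := by
    conv_lhs => rw [show r = (r-1) + 1 by omega]
    ring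
  have hkey := key b
  omega

lemma zrot : ∀ x y : ZMod 2, x = (x + y) + y := by decide

open Classical in
lemma Arr_label_card (hr : 1 ≤ r) (δ : ZMod 2) (c : Fin (r+1)) (b : ZMod 2) :
    ((univ : Finset (V r × V r)).filter fun p => Arr r δ p.1 p.2 = some (c, b)).card
      = 2 ^ (r - 1) := by
  classical
  rw [← fiber_card r hr (uf_ne_zero r hr c) (b + δ * eps r c)]
  apply Finset.card_bij (fun p _ => p.1)
  · intro p hp
    simp only [mem_filter, mem_univ, true_and] at hp ⊢
    obtain ⟨h1, h2⟩ := (Arr_eq_some r).mp hp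
    rw [h2]
    exact zrot _ _
  · intro p hp q hq he
    simp only [mem_filter, mem_univ, true_and] at hp hq
    obtain ⟨h1, _⟩ := (Arr_eq_some r).mp hp
    obtain ⟨h2, _⟩ := (Arr_eq_some r).mp hq
    have : p.2 = q.2 := by
      have e1 := congrArg (p.1 + ·) (h1.trans h2.symm)
      rwa [← add_assoc, v_add_self, zero_add, he, ← add_assoc, v_add_self, zero_add] at e1
    exact Prod.ext he this
  · intro i hi
    simp only [mem_filter, mem_univ, true_and] at hi
    refine ⟨(i, i + vec r c), ?_, rfl⟩
    simp only [mem_filter, mem_univ, true_and]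
    rw [Arr_eq_some]
    constructor
    · rw [← add_assoc, v_add_self, zero_add]
    · rw [hi]
      exact zrot _ _

open Classical in
lemma Arr_none_card (j : V r) (δ : ZMod 2) :
    ((univ : Finset (V r)).filter fun i => Arr r δ i j = none).card = 2 ^ r - (r + 1) := by
  classical
  have himg : (univ.filter fun i : V r => ¬ Arr r δ i j = none) =
      (univ.image fun c : Fin (r+1) => vec r c + j) := by
    ext i
    simp only [mem_filter, mem_univ, true_and, mem_image]
    rw [Arr_eq_none]
    push_neg
    constructor
    · rintro ⟨c, hc⟩
      exact ⟨c, by rw [hc, add_assoc, v_add_self, add_zero]⟩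
    · rintro ⟨c, hc⟩
      exact ⟨c, by rw [← hc, add_assoc, v_add_self, add_zero]⟩
  have hcard : (univ.filter fun i : V r => ¬ Arr r δ i j = none).card = r + 1 := by
    rw [himg, Finset.card_image_of_injective _ (fun a b h => vec_inj r (add_right_cancel h))]
    simp
  have := Finset.card_filter_add_card_filter_not
    (s := (univ : Finset (V r))) (p := fun i => Arr r δ i j = none)
  rw [Finset.card_univ, card_V] at this
  omega


noncomputable def eV (r : ℕ) : V r ≃ Fin (2 ^ r) := Fintype.equivFinOfCardEq (card_V r)

/-- the equiv `Fin (a*b) ≃ Fin a × Fin b` given by `(blkIdx, inIdx)`. -/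
def blkEquiv (a b : ℕ) : Fin (a * b) ≃ Fin a × Fin b where
  toFun j := (blkIdx j, inIdx j)
  invFun p := ⟨p.1.val * b + p.2.val, by
    calc p.1.val * b + p.2.val < p.1.val * b + b := by omega
    _ = (p.1.val + 1) * b := by ring
    _ ≤ a * b := Nat.mul_le_mul_right b p.1.isLt⟩
  left_inv j := by
    apply Fin.ext
    simp only [blkIdx, inIdx]
    rw [Nat.div_add_mod']
  right_inv p := by
    have hb : 0 < b := p.2.pos
    apply Prod.ext
    · apply Fin.ext
      simp only [blkIdx, inIdx]
      rw [Nat.mul_comm (p.1 : ℕ) b, Nat.mul_add_div hb, Nat.div_eq_of_lt p.2.isLt]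
      omega
    · apply Fin.ext
      simp only [blkIdx, inIdx]
      rw [Nat.mul_comm (p.1 : ℕ) b, Nat.mul_add_mod, Nat.mod_eq_of_lt p.2.isLt]

lemma blkIdx_symm (a b : ℕ) (p : Fin a × Fin b) :
    blkIdx ((blkEquiv a b).symm p) = p.1 ∧ inIdx ((blkEquiv a b).symm p) = p.2 := by
  have := (blkEquiv a b).apply_symm_apply p
  exact ⟨congrArg Prod.fst this, congrArg Prod.snd this⟩

def intEnc (r s : ℕ) (c : Fin (r+1)) (b : ZMod 2) : ℕ :=
  2 * ((2*r+2) * s + (2 * c.val + b.val))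

def starEnc (Kb j k : ℕ) : ℕ := 2 * (j * Kb + k) + 1

lemma intEnc_ne_starEnc (r s : ℕ) (c b) (Kb j k : ℕ) :
    intEnc r s c b ≠ starEnc Kb j k := by
  simp only [intEnc, starEnc]; omega

lemma zmod_val_lt (b : ZMod 2) : b.val < 2 := ZMod.val_lt b

lemma zmod_val_inj {b b' : ZMod 2} (h : b.val = b'.val) : b = b' := by
  revert h; revert b b'; decide

lemma intEnc_inj {r s s' : ℕ} {c c' : Fin (r+1)} {b b' : ZMod 2}
    (h : intEnc r s c b = intEnc r s' c' b') : s = s' ∧ c = c' ∧ b = b' := by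
  simp only [intEnc] at h
  have h1 : (2*r+2) * s + (2 * c.val + b.val) = (2*r+2) * s' + (2 * c'.val + b'.val) := by omega
  have hc : c.val ≤ r := Nat.lt_succ_iff.mp c.isLt
  have hc' : c'.val ≤ r := Nat.lt_succ_iff.mp c'.isLt
  have hb := zmod_val_lt b; have hb' := zmod_val_lt b'
  have hm : 2 * c.val + b.val < 2*r+2 := by omega
  have hm' : 2 * c'.val + b'.val < 2*r+2 := by omega
  have hs : s = s' := by
    have := Nat.div_eq_of_lt hm
    have h2 : ((2*r+2) * s + (2 * c.val + b.val)) / (2*r+2) = s := by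
      rw [Nat.mul_add_div (by omega), Nat.div_eq_of_lt hm]; omega
    have h3 : ((2*r+2) * s' + (2 * c'.val + b'.val)) / (2*r+2) = s' := by
      rw [Nat.mul_add_div (by omega), Nat.div_eq_of_lt hm']; omega
    rw [← h2, h1, h3]
  subst hs
  have h4 : 2 * c.val + b.val = 2 * c'.val + b'.val := by omega
  have hcv : c.val = c'.val := by omega
  exact ⟨rfl, Fin.ext hcv, zmod_val_inj (by omega)⟩

lemma rep_unique {a k k' m m' : ℕ} (hm : m < a) (hm' : m' < a)
    (h : k * a + m = k' * a + m') : k = k' ∧ m = m' := by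
  have key : ∀ x y u v : ℕ, u < a → v < a → x < y → x * a + u ≠ y * a + v := by
    intro x y u v hu hv hxy heq
    have : x * a + u < y * a + v := by
      calc x * a + u < x * a + a := by omega
      _ = (x+1) * a := by ring
      _ ≤ y * a := Nat.mul_le_mul_right a hxy
      _ ≤ y * a + v := by omega
    omega
  have h1 : k = k' := by
    rcases Nat.lt_trichotomy k k' with hlt | he | hgt
    · exact absurd h (key _ _ _ _ hm hm' hlt)
    · exact he
    · exact absurd h.symm (key _ _ _ _ hm' hm hgt)
  subst h1
  exact ⟨rfl, by omega⟩

lemma starEnc_inj {Kb : ℕ} {j k j' k' : ℕ} (hk : k < Kb) (hk' : k' < Kb)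
    (h : starEnc Kb j k = starEnc Kb j' k') : j = j' ∧ k = k' := by
  simp only [starEnc] at h
  exact rep_unique hk hk' (by omega)

variable {Kb fb : ℕ}

def pairEnc (p : Fin fb × Fin Kb) : ℕ := p.1.val * Kb + p.2.val

lemma pairEnc_inj (p q : Fin fb × Fin Kb) (h : pairEnc p = pairEnc q) : p = q := by
  simp only [pairEnc] at h
  have := p.2.isLt; have := q.2.isLt
  have h1 := rep_unique p.2.isLt q.2.isLt h
  exact Prod.ext (Fin.ext h1.1) (Fin.ext h1.2)

def dcell (Pb : Fin fb → Fin Kb → Option ℕ) (p : Fin fb × Fin Kb) : ZMod 2 :=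
  if ∃ q : Fin fb × Fin Kb, Pb q.1 q.2 = Pb p.1 p.2 ∧ pairEnc q < pairEnc p then 1 else 0

noncomputable def liftP (r : ℕ) (Pb : Fin fb → Fin Kb → Option ℕ)
    (J : Fin (2 ^ r * fb)) (K : Fin (2 ^ r * Kb)) : Option ℕ :=
  (Pb (inIdx J) (inIdx K)).elim
    (if blkIdx J = blkIdx K then some (starEnc Kb (inIdx J).val (inIdx K).val) else none)
    (fun s => (Arr r (dcell Pb (inIdx J, inIdx K)) ((eV r).symm (blkIdx J))
        ((eV r).symm (blkIdx K))).map fun cb => intEnc r s cb.1 cb.2)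

noncomputable def liftS (r : ℕ) (Sb : Finset ℕ) (Pb : Fin fb → Fin Kb → Option ℕ) : Finset ℕ :=
  ((Sb ×ˢ (univ : Finset (Fin (r+1) × ZMod 2))).image fun x => intEnc r x.1 x.2.1 x.2.2) ∪
  (((univ : Finset (Fin fb × Fin Kb)).filter fun p => Pb p.1 p.2 = none).image
    fun p => starEnc Kb p.1.val p.2.val)


section Glob
variable {Zb : ℕ} {Sb : Finset ℕ} {Pb : Fin fb → Fin Kb → Option ℕ}

lemma two_occ (hPb : IsPDA Pb Zb Sb) (hreg : IsRegularPDA Pb Sb 2)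
    {s : ℕ} {p1 p2 : Fin fb × Fin Kb}
    (h1 : Pb p1.1 p1.2 = some s) (h2 : Pb p2.1 p2.2 = some s) (hne : p1 ≠ p2) :
    ∀ q : Fin fb × Fin Kb, Pb q.1 q.2 = some s → q = p1 ∨ q = p2 := by
  classical
  have hs : s ∈ Sb := hPb.2.2.1 _ _ _ h1
  have hcard := hreg s hs
  have hsub : ({p1, p2} : Finset (Fin fb × Fin Kb)) ⊆
      univ.filter fun jk => Pb jk.1 jk.2 = some s := by
    intro q hq
    rcases Finset.mem_insert.mp hq with rfl | hq
    · exact Finset.mem_filter.mpr ⟨mem_univ _, h1⟩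
    · rw [Finset.mem_singleton.mp hq]
      exact Finset.mem_filter.mpr ⟨mem_univ _, h2⟩
  have hPcard : ({p1, p2} : Finset (Fin fb × Fin Kb)).card = 2 := by
    rw [Finset.card_insert_of_notMem (by simpa using hne), Finset.card_singleton]
  have heq := Finset.eq_of_subset_of_card_le hsub (by omega)
  intro q hq
  have : q ∈ ({p1, p2} : Finset (Fin fb × Fin Kb)) := by
    rw [heq]; exact Finset.mem_filter.mpr ⟨mem_univ _, hq⟩
  simpa using this

lemma zne : ∀ a b : ZMod 2, a ≠ b → b = a + 1 := by decide

lemma dcell_two (hPb : IsPDA Pb Zb Sb) (hreg : IsRegularPDA Pb Sb 2)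
    {s : ℕ} {p1 p2 : Fin fb × Fin Kb}
    (h1 : Pb p1.1 p1.2 = some s) (h2 : Pb p2.1 p2.2 = some s) (hne : p1 ≠ p2) :
    dcell Pb p2 = dcell Pb p1 + 1 := by
  classical
  have main : ∀ q1 q2 : Fin fb × Fin Kb, Pb q1.1 q1.2 = some s → Pb q2.1 q2.2 = some s →
      q1 ≠ q2 → pairEnc q1 < pairEnc q2 → dcell Pb q1 = 0 ∧ dcell Pb q2 = 1 := by
    intro q1 q2 hq1 hq2 hq hlt
    constructor
    · rw [dcell, if_neg]
      rintro ⟨q, hq', hlt'⟩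
      rw [hq1] at hq'
      rcases two_occ hPb hreg hq1 hq2 hq q hq' with rfl | rfl
      · omega
      · omega
    · rw [dcell, if_pos ⟨q1, by rw [hq1, hq2], hlt⟩]
  have hpe : pairEnc p1 ≠ pairEnc p2 := fun h => hne (pairEnc_inj _ _ h)
  rcases Nat.lt_or_ge (pairEnc p1) (pairEnc p2) with hlt | hge
  · obtain ⟨e1, e2⟩ := main p1 p2 h1 h2 hne hlt
    rw [e1, e2]
    decide
  · obtain ⟨e1, e2⟩ := main p2 p1 h2 h1 (Ne.symm hne) (by omega)
    rw [e1, e2]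
    decide

lemma liftP_of_none {J : Fin (2 ^ r * fb)} {K : Fin (2 ^ r * Kb)}
    (h : Pb (inIdx J) (inIdx K) = none) :
    liftP r Pb J K = if blkIdx J = blkIdx K
      then some (starEnc Kb (inIdx J).val (inIdx K).val) else none := by
  rw [liftP, h]; rfl

lemma liftP_of_some {J : Fin (2 ^ r * fb)} {K : Fin (2 ^ r * Kb)} {s : ℕ}
    (h : Pb (inIdx J) (inIdx K) = some s) :
    liftP r Pb J K = (Arr r (dcell Pb (inIdx J, inIdx K)) ((eV r).symm (blkIdx J))
        ((eV r).symm (blkIdx K))).map fun cb => intEnc r s cb.1 cb.2 := by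
  rw [liftP, h]; rfl

/-- index bijection for counting. -/
noncomputable def G (r Kb fb : ℕ) :
    ((Fin fb × Fin Kb) × (V r × V r)) ≃ (Fin (2 ^ r * fb) × Fin (2 ^ r * Kb)) where
  toFun q := ((blkEquiv (2^r) fb).symm (eV r q.2.1, q.1.1),
              (blkEquiv (2^r) Kb).symm (eV r q.2.2, q.1.2))
  invFun p := ((inIdx p.1, inIdx p.2), ((eV r).symm (blkIdx p.1), (eV r).symm (blkIdx p.2)))
  left_inv q := by
    obtain ⟨a1, a2⟩ := blkIdx_symm (2^r) fb (eV r q.2.1, q.1.1)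
    obtain ⟨b1, b2⟩ := blkIdx_symm (2^r) Kb (eV r q.2.2, q.1.2)
    simp only [a1, a2, b1, b2, Equiv.symm_apply_apply]
  right_inv p := by
    simp only [Equiv.apply_symm_apply]
    have h1 : ∀ (a b : ℕ) (j : Fin (a*b)), (blkEquiv a b).symm (blkIdx j, inIdx j) = j :=
      fun a b j => (blkEquiv a b).symm_apply_apply j
    rw [h1, h1]

lemma liftP_G (q : (Fin fb × Fin Kb) × (V r × V r)) :
    liftP r Pb ((G r Kb fb) q).1 ((G r Kb fb) q).2 =
      (Pb q.1.1 q.1.2).elim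
        (if q.2.1 = q.2.2 then some (starEnc Kb q.1.1.val q.1.2.val) else none)
        (fun s => (Arr r (dcell Pb (q.1.1, q.1.2)) q.2.1 q.2.2).map
          fun cb => intEnc r s cb.1 cb.2) := by
  obtain ⟨a1, a2⟩ := blkIdx_symm (2^r) fb (eV r q.2.1, q.1.1)
  obtain ⟨b1, b2⟩ := blkIdx_symm (2^r) Kb (eV r q.2.2, q.1.2)
  rw [liftP]
  simp only [G, Equiv.coe_fn_mk, a1, a2, b1, b2, Equiv.symm_apply_apply]
  congr 1
  simp [Equiv.apply_eq_iff_eq]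


lemma ob_colStars (hPb : IsPDA Pb Zb Sb) (hr : 1 ≤ r) (K : Fin (2 ^ r * Kb)) :
    colStars (liftP r Pb) K = (2 ^ r - (r + 1)) * fb + r * Zb := by
  classical
  have hrlt : r < 2 ^ r := Nat.lt_two_pow_self
  rw [colStars, card_filter_equiv ((blkEquiv (2^r) fb).symm), Finset.card_filter,
    Fintype.sum_prod_type, Finset.sum_comm]
  have hinner : ∀ jb : Fin fb,
      (∑ i : Fin (2^r), if liftP r Pb ((blkEquiv (2^r) fb).symm (i, jb)) K = none
          then 1 else 0)
        = (2^r - (r+1)) + (if Pb jb (inIdx K) = none then r else 0) := by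
    intro jb
    rcases hb : Pb jb (inIdx K) with _ | s
    · have key : ∀ i : Fin (2^r),
          (liftP r Pb ((blkEquiv (2^r) fb).symm (i, jb)) K = none) ↔ ¬ (i = blkIdx K) := by
        intro i
        obtain ⟨a1, a2⟩ := blkIdx_symm (2^r) fb (i, jb)
        rw [liftP_of_none r (by rw [a2]; exact hb), a1]
        constructor
        · intro h hi; rw [if_pos hi] at h; cases h
        · intro hi; rw [if_neg hi]
      rw [Finset.sum_congr rfl (fun i _ => by rw [if_congr (key i) rfl rfl])]
      rw [← Finset.card_filter]
      have hsplit := Finset.card_filter_add_card_filter_not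
        (s := (univ : Finset (Fin (2^r)))) (p := fun i => i = blkIdx K)
      have h1 : (univ.filter fun i : Fin (2^r) => i = blkIdx K).card = 1 := by
        rw [Finset.filter_eq', if_pos (mem_univ _), Finset.card_singleton]
      rw [Finset.card_univ, Fintype.card_fin] at hsplit
      rw [if_pos rfl]
      omega
    · have key : ∀ i : Fin (2^r),
          (liftP r Pb ((blkEquiv (2^r) fb).symm (i, jb)) K = none) ↔
            Arr r (dcell Pb (jb, inIdx K)) ((eV r).symm i) ((eV r).symm (blkIdx K)) = none := by
        intro i
        obtain ⟨a1, a2⟩ := blkIdx_symm (2^r) fb (i, jb)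
        rw [liftP_of_some r (by rw [a2]; exact hb), a1, a2, Option.map_eq_none_iff]
      rw [Finset.sum_congr rfl (fun i _ => by rw [if_congr (key i) rfl rfl])]
      rw [← Finset.card_filter, card_filter_equiv (eV r)]
      have : ∀ v : V r, ((eV r).symm ((eV r) v)) = v := fun v => (eV r).symm_apply_apply v
      rw [Finset.filter_congr (fun v _ => by rw [this v])]
      rw [Arr_none_card]
      rw [if_neg (by simp)]
      omega
  rw [Finset.sum_congr rfl (fun jb _ => hinner jb), Finset.sum_add_distrib,
    Finset.sum_const, ← Finset.sum_filter, Finset.sum_const]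
  have hZ : (univ.filter fun jb : Fin fb => Pb jb (inIdx K) = none).card = Zb :=
    hPb.1 (inIdx K)
  rw [hZ, Finset.card_univ, Fintype.card_fin, smul_eq_mul, smul_eq_mul,
    Nat.mul_comm fb, Nat.mul_comm Zb]


lemma idx_ext {a b : ℕ} {j j' : Fin (a*b)} (h1 : blkIdx j = blkIdx j')
    (h2 : inIdx j = inIdx j') : j = j' :=
  (blkEquiv a b).injective (Prod.ext h1 h2)

lemma ob_blackburn (hPb : IsPDA Pb Zb Sb) (hreg : IsRegularPDA Pb Sb 2)
    (J1 : Fin (2^r * fb)) (K1 : Fin (2^r * Kb)) (J2 : Fin (2^r * fb)) (K2 : Fin (2^r * Kb))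
    (x : ℕ) (hne : (J1, K1) ≠ (J2, K2))
    (h1 : liftP r Pb J1 K1 = some x) (h2 : liftP r Pb J2 K2 = some x) :
    liftP r Pb J1 K2 = none ∧ liftP r Pb J2 K1 = none := by
  classical
  rcases hb1 : Pb (inIdx J1) (inIdx K1) with _ | s1 <;>
    rcases hb2 : Pb (inIdx J2) (inIdx K2) with _ | s2
  · -- none, none
    rw [liftP_of_none r hb1] at h1
    rw [liftP_of_none r hb2] at h2
    have hblk1 : blkIdx J1 = blkIdx K1 := by
      by_contra hc; rw [if_neg hc] at h1; cases h1
    have hblk2 : blkIdx J2 = blkIdx K2 := by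
      by_contra hc; rw [if_neg hc] at h2; cases h2
    rw [if_pos hblk1] at h1
    rw [if_pos hblk2] at h2
    have hx := (Option.some.inj h1).trans (Option.some.inj h2).symm
    obtain ⟨ej, ek⟩ := starEnc_inj (inIdx K1).isLt (inIdx K2).isLt hx
    have hinJ : inIdx J1 = inIdx J2 := Fin.ext ej
    have hinK : inIdx K1 = inIdx K2 := Fin.ext ek
    have hb1' : Pb (inIdx J1) (inIdx K2) = none := by rw [← hinK]; exact hb1
    have hb2' : Pb (inIdx J2) (inIdx K1) = none := by rw [← hinJ]; exact hb1
    constructor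
    · rw [liftP_of_none r hb1', if_neg]
      intro hc
      have hKK : K1 = K2 := idx_ext (hblk1.symm.trans hc) hinK
      have hJJ : J1 = J2 := idx_ext ((hc.trans hblk2.symm)) hinJ
      exact hne (Prod.ext hJJ hKK)
    · rw [liftP_of_none r hb2', if_neg]
      intro hc
      have hKK : K1 = K2 := idx_ext ((hc.symm.trans hblk2)) hinK
      have hJJ : J1 = J2 := idx_ext ((hblk1.trans hc.symm)) hinJ
      exact hne (Prod.ext hJJ hKK)
  · -- none, some
    rw [liftP_of_none r hb1] at h1
    rw [liftP_of_some r hb2] at h2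
    obtain ⟨cb, _, hxe⟩ := Option.map_eq_some_iff.mp h2
    have hblk1 : blkIdx J1 = blkIdx K1 := by
      by_contra hc; rw [if_neg hc] at h1; cases h1
    rw [if_pos hblk1] at h1
    exact absurd (hxe.trans (Option.some.inj h1).symm) (intEnc_ne_starEnc _ _ _ _ _ _ _)
  · -- some, none
    rw [liftP_of_some r hb1] at h1
    rw [liftP_of_none r hb2] at h2
    obtain ⟨cb, _, hxe⟩ := Option.map_eq_some_iff.mp h1
    have hblk2 : blkIdx J2 = blkIdx K2 := by
      by_contra hc; rw [if_neg hc] at h2; cases h2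
    rw [if_pos hblk2] at h2
    exact absurd (hxe.trans (Option.some.inj h2).symm) (intEnc_ne_starEnc _ _ _ _ _ _ _)
  · -- some, some
    rw [liftP_of_some r hb1] at h1
    rw [liftP_of_some r hb2] at h2
    obtain ⟨⟨c1, b1⟩, hA1, hxe1⟩ := Option.map_eq_some_iff.mp h1
    obtain ⟨⟨c2, b2⟩, hA2, hxe2⟩ := Option.map_eq_some_iff.mp h2
    obtain ⟨hs, hc, hbb⟩ := intEnc_inj (hxe1.trans hxe2.symm)
    subst hs; subst hc; subst hbb
    by_cases hpp : ((inIdx J1 : Fin fb), (inIdx K1 : Fin Kb)) = (inIdx J2, inIdx K2)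
    · -- same base cell
      have hj : (inIdx J1 : Fin fb) = inIdx J2 := congrArg Prod.fst hpp
      have hk : (inIdx K1 : Fin Kb) = inIdx K2 := congrArg Prod.snd hpp
      rw [← hj, ← hk] at hA2
      have hnepair : (((eV r).symm (blkIdx J1), (eV r).symm (blkIdx K1)) : V r × V r) ≠
          ((eV r).symm (blkIdx J2), (eV r).symm (blkIdx K2)) := by
        intro hc
        have e1 : (eV r).symm (blkIdx J1) = (eV r).symm (blkIdx J2) := congrArg Prod.fst hc
        have e2 : (eV r).symm (blkIdx K1) = (eV r).symm (blkIdx K2) := congrArg Prod.snd hc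
        exact hne (Prod.ext (idx_ext ((eV r).symm.injective e1) hj)
          (idx_ext ((eV r).symm.injective e2) hk))
      obtain ⟨z1, z2⟩ := Arr_blackburn r
        (δ' := dcell Pb (inIdx J1, inIdx K2)) (δ'' := dcell Pb (inIdx J2, inIdx K1))
        hA1 hA2 hnepair
      have hb1' : Pb (inIdx J1) (inIdx K2) = some s1 := by rw [← hk]; exact hb1
      have hb2' : Pb (inIdx J2) (inIdx K1) = some s1 := by rw [← hj]; exact hb1
      constructor
      · rw [liftP_of_some r hb1', Option.map_eq_none_iff]
        exact z1
      · rw [liftP_of_some r hb2', Option.map_eq_none_iff]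
        exact z2
    · -- distinct base cells
      have hbase := hPb.2.2.2 (inIdx J1) (inIdx K1) (inIdx J2) (inIdx K2) s1 hpp hb1 hb2
      have hdd := dcell_two hPb hreg hb1 hb2 hpp
      obtain ⟨w1, w2⟩ := Arr_cross r hdd hA1 hA2
      constructor
      · rw [liftP_of_none r hbase.1, if_neg]
        intro hc
        exact w1 (by rw [hc])
      · rw [liftP_of_none r hbase.2, if_neg]
        intro hc
        exact w2 (by rw [hc])


lemma pow_split (hr : 1 ≤ r) : 2 * 2 ^ (r - 1) = 2 ^ r := by
  conv_rhs => rw [show r = (r-1) + 1 by omega]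
  ring

lemma count_int (hPb : IsPDA Pb Zb Sb) (hreg : IsRegularPDA Pb Sb 2) (hr : 1 ≤ r)
    {s : ℕ} (hs : s ∈ Sb) (c : Fin (r+1)) (b : ZMod 2) :
    ((univ : Finset (Fin (2^r * fb) × Fin (2^r * Kb))).filter
      fun JK => liftP r Pb JK.1 JK.2 = some (intEnc r s c b)).card = 2 ^ r := by
  classical
  rw [card_filter_equiv (G r Kb fb), Finset.card_filter, Fintype.sum_prod_type]
  have hinner : ∀ p : Fin fb × Fin Kb,
      (∑ vw : V r × V r, if liftP r Pb ((G r Kb fb) (p, vw)).1 ((G r Kb fb) (p, vw)).2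
          = some (intEnc r s c b) then 1 else 0)
        = if Pb p.1 p.2 = some s then 2^(r-1) else 0 := by
    intro p
    rcases hb : Pb p.1 p.2 with _ | s'
    · rw [if_neg (fun h => by cases h)]
      apply Finset.sum_eq_zero
      intro vw _
      rw [if_neg]
      rw [liftP_G r (p, vw)]
      show ¬ ((Pb p.1 p.2).elim _ _ = _)
      rw [hb]
      intro h
      simp only [Option.elim] at h
      split_ifs at h with hd
      exact intEnc_ne_starEnc r s c b Kb _ _ (Option.some.inj h).symm
    · by_cases hss : s' = s
      · subst hss
        rw [if_pos rfl]
        have key : ∀ vw : V r × V r,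
            (liftP r Pb ((G r Kb fb) (p, vw)).1 ((G r Kb fb) (p, vw)).2
              = some (intEnc r s' c b)) ↔ Arr r (dcell Pb p) vw.1 vw.2 = some (c, b) := by
          intro vw
          rw [liftP_G r (p, vw)]
          show ((Pb p.1 p.2).elim _ _ = _) ↔ _
          rw [hb]
          simp only [Option.elim]
          constructor
          · intro h
            obtain ⟨⟨c', b'⟩, hA, he⟩ := Option.map_eq_some_iff.mp h
            obtain ⟨_, hc, hbb⟩ := intEnc_inj he
            rw [← hc, ← hbb]
            exact hA
          · intro h
            rw [Option.map_eq_some_iff]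
            exact ⟨(c, b), h, rfl⟩
        rw [Finset.sum_congr rfl (fun vw _ => if_congr (key vw) rfl rfl),
          ← Finset.card_filter]
        exact Arr_label_card r hr _ c b
      · rw [if_neg (fun h => hss (Option.some.inj h))]
        apply Finset.sum_eq_zero
        intro vw _
        rw [if_neg]
        rw [liftP_G r (p, vw)]
        show ¬ ((Pb p.1 p.2).elim _ _ = _)
        rw [hb]
        simp only [Option.elim]
        intro h
        obtain ⟨⟨c', b'⟩, hA, he⟩ := Option.map_eq_some_iff.mp h
        exact hss (intEnc_inj he).1
  rw [Finset.sum_congr rfl (fun p _ => hinner p), ← Finset.sum_filter,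
    Finset.sum_const, hreg s hs, smul_eq_mul, pow_split r hr]

lemma count_star (hPb : IsPDA Pb Zb Sb) {p0 : Fin fb × Fin Kb}
    (hp0 : Pb p0.1 p0.2 = none) :
    ((univ : Finset (Fin (2^r * fb) × Fin (2^r * Kb))).filter
      fun JK => liftP r Pb JK.1 JK.2 = some (starEnc Kb p0.1.val p0.2.val)).card = 2 ^ r := by
  classical
  rw [card_filter_equiv (G r Kb fb), Finset.card_filter, Fintype.sum_prod_type]
  have hinner : ∀ p : Fin fb × Fin Kb,
      (∑ vw : V r × V r, if liftP r Pb ((G r Kb fb) (p, vw)).1 ((G r Kb fb) (p, vw)).2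
          = some (starEnc Kb p0.1.val p0.2.val) then 1 else 0)
        = if p = p0 then 2^r else 0 := by
    intro p
    rcases hb : Pb p.1 p.2 with _ | s'
    · by_cases hpp : p = p0
      · subst hpp
        rw [if_pos rfl]
        have key : ∀ vw : V r × V r,
            (liftP r Pb ((G r Kb fb) (p, vw)).1 ((G r Kb fb) (p, vw)).2
              = some (starEnc Kb p.1.val p.2.val)) ↔ vw.1 = vw.2 := by
          intro vw
          rw [liftP_G r (p, vw)]
          show ((Pb p.1 p.2).elim _ _ = _) ↔ _
          rw [hb]
          simp only [Option.elim]
          constructor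
          · intro h
            by_contra hd
            rw [if_neg hd] at h
            cases h
          · intro hd
            rw [if_pos hd]
        rw [Finset.sum_congr rfl (fun vw _ => if_congr (key vw) rfl rfl),
          Fintype.sum_prod_type]
        have : ∀ v : V r, (∑ w : V r, if v = w then 1 else 0) = 1 := by
          intro v
          rw [Finset.sum_ite_eq univ v (fun _ => 1), if_pos (mem_univ v)]
        rw [Finset.sum_congr rfl (fun v _ => this v), Finset.sum_const,
          Finset.card_univ, card_V, smul_eq_mul, Nat.mul_one]
      · rw [if_neg hpp]
        apply Finset.sum_eq_zero
        intro vw _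
        rw [if_neg]
        rw [liftP_G r (p, vw)]
        show ¬ ((Pb p.1 p.2).elim _ _ = _)
        rw [hb]
        simp only [Option.elim]
        intro h
        split_ifs at h with hd
        obtain ⟨e1, e2⟩ := starEnc_inj p.2.isLt p0.2.isLt (Option.some.inj h)
        exact hpp (Prod.ext (Fin.ext e1) (Fin.ext e2))
    · rw [if_neg (fun h => by rw [h, hp0] at hb; cases hb)]
      apply Finset.sum_eq_zero
      intro vw _
      rw [if_neg]
      rw [liftP_G r (p, vw)]
      show ¬ ((Pb p.1 p.2).elim _ _ = _)
      rw [hb]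
      simp only [Option.elim]
      intro h
      obtain ⟨⟨c', b'⟩, hA, he⟩ := Option.map_eq_some_iff.mp h
      exact intEnc_ne_starEnc r s' c' b' Kb _ _ he
  rw [Finset.sum_congr rfl (fun p _ => hinner p),
    Finset.sum_ite_eq' univ p0 (fun _ => 2^r), if_pos (mem_univ p0)]

lemma ob_regular (hPb : IsPDA Pb Zb Sb) (hreg : IsRegularPDA Pb Sb 2) (hr : 1 ≤ r) :
    IsRegularPDA (liftP r Pb) (liftS r Sb Pb) (2 ^ r) := by
  intro x hx
  rcases Finset.mem_union.mp hx with hx | hx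
  · obtain ⟨⟨s, c, b⟩, hmem, rfl⟩ := Finset.mem_image.mp hx
    exact count_int r hPb hreg hr (Finset.mem_product.mp hmem).1 c b
  · obtain ⟨p, hmem, rfl⟩ := Finset.mem_image.mp hx
    exact count_star r hPb (Finset.mem_filter.mp hmem).2

lemma ob_exists (hPb : IsPDA Pb Zb Sb) (hreg : IsRegularPDA Pb Sb 2) (hr : 1 ≤ r) :
    ∀ x ∈ liftS r Sb Pb, ∃ J K, liftP r Pb J K = some x := by
  intro x hx
  have hc := ob_regular r hPb hreg hr x hx
  have hpos : 0 < ((univ : Finset (Fin (2^r * fb) × Fin (2^r * Kb))).filter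
      fun JK => liftP r Pb JK.1 JK.2 = some x).card := by
    rw [hc]; exact Nat.pow_pos (by omega)
  obtain ⟨⟨J, K⟩, hJK⟩ := Finset.card_pos.mp hpos
  exact ⟨J, K, (Finset.mem_filter.mp hJK).2⟩

lemma ob_mem (hPb : IsPDA Pb Zb Sb) :
    ∀ J K x, liftP r Pb J K = some x → x ∈ liftS r Sb Pb := by
  intro J K x h
  rcases hb : Pb (inIdx J) (inIdx K) with _ | s
  · rw [liftP_of_none r hb] at h
    split_ifs at h with hd
    · apply Finset.mem_union_right
      apply Finset.mem_image.mpr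
      exact ⟨(inIdx J, inIdx K), Finset.mem_filter.mpr ⟨mem_univ _, hb⟩,
        (Option.some.inj h)⟩
  · rw [liftP_of_some r hb] at h
    obtain ⟨⟨c, b⟩, hA, he⟩ := Option.map_eq_some_iff.mp h
    apply Finset.mem_union_left
    apply Finset.mem_image.mpr
    exact ⟨(s, c, b), Finset.mem_product.mpr ⟨hPb.2.2.1 _ _ _ hb, mem_univ _⟩, he⟩

lemma ob_card (hPb : IsPDA Pb Zb Sb) :
    (liftS r Sb Pb).card = (2 + 2 * r) * Sb.card + Kb * Zb := by
  classical
  rw [liftS, Finset.card_union_of_disjoint]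
  · have h1 : ((Sb ×ˢ (univ : Finset (Fin (r+1) × ZMod 2))).image
        fun x => intEnc r x.1 x.2.1 x.2.2).card = (2 + 2 * r) * Sb.card := by
      rw [Finset.card_image_of_injective _ (fun x y h => by
        obtain ⟨h1, h2, h3⟩ := intEnc_inj h
        exact Prod.ext h1 (Prod.ext h2 h3))]
      rw [Finset.card_product, Finset.card_univ, Fintype.card_prod, Fintype.card_fin]
      have : Fintype.card (ZMod 2) = 2 := by simp
      rw [this]
      ring
    have h2 : (((univ : Finset (Fin fb × Fin Kb)).filter fun p => Pb p.1 p.2 = none).image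
        fun p => starEnc Kb p.1.val p.2.val).card = Kb * Zb := by
      rw [Finset.card_image_of_injOn (fun p _ q _ h => by
        obtain ⟨e1, e2⟩ := starEnc_inj p.2.isLt q.2.isLt h
        exact Prod.ext (Fin.ext e1) (Fin.ext e2))]
      rw [Finset.card_filter, Fintype.sum_prod_type, Finset.sum_comm]
      have : ∀ k : Fin Kb, (∑ j : Fin fb, if Pb j k = none then 1 else 0) = Zb := by
        intro k
        rw [← Finset.card_filter]
        exact hPb.1 k
      rw [Finset.sum_congr rfl (fun k _ => this k), Finset.sum_const, Finset.card_univ,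
        Fintype.card_fin, smul_eq_mul]
    rw [h1, h2]
  · rw [Finset.disjoint_left]
    intro a ha hb
    obtain ⟨⟨s, c, b⟩, _, rfl⟩ := Finset.mem_image.mp ha
    obtain ⟨p, _, hp⟩ := Finset.mem_image.mp hb
    exact intEnc_ne_starEnc r s c b Kb _ _ hp.symm

end Glob
end S18

/-- **`2^r`-lifting of a 2-PDA.** If there exists a 2-regular
`(K_b, f_b, Z_b, S_b)` PDA, then for every `r ≥ 1` there exists a `2^r`-regular PDA with
parameters `(2^r K_b, 2^r f_b, (2^r − r − 1) f_b + r Z_b, (2 + 2r)|S_b| + K_b Z_b)`. -/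
theorem stmt_18 {Kb fb Zb : ℕ} (Sb : Finset ℕ) (Pb : Fin fb → Fin Kb → Option ℕ)
    (hPb : IsPDA Pb Zb Sb) (hreg : IsRegularPDA Pb Sb 2) (r : ℕ) (hr : 1 ≤ r) :
    ∃ (P : Fin (2 ^ r * fb) → Fin (2 ^ r * Kb) → Option ℕ) (S : Finset ℕ),
      IsPDA P ((2 ^ r - (r + 1)) * fb + r * Zb) S ∧
      IsRegularPDA P S (2 ^ r) ∧
      S.card = (2 + 2 * r) * Sb.card + Kb * Zb := by
  refine ⟨S18.liftP r Pb, S18.liftS r Sb Pb, ⟨?_, ?_, ?_, ?_⟩, ?_, ?_⟩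
  · exact fun K => S18.ob_colStars r hPb hr K
  · exact S18.ob_exists r hPb hreg hr
  · exact S18.ob_mem r hPb
  · exact fun J1 K1 J2 K2 x hne h1 h2 => S18.ob_blackburn r hPb hreg J1 K1 J2 K2 x hne h1 h2
  · exact S18.ob_regular r hPb hreg hr
  · exact S18.ob_card r hPb
end

section
/- (Rate of a lifted caching scheme) If there exists a (K, f, Z, S) placement delivery array, then there is a coded caching scheme for K users and N files in which each file is split into f equal subfiles, each user caches exactly NZ/f subfile-equivalents (M/N = Z/f), and for every demand vector the server transmission consists of |S| coded packets each of size F/f, achieving rate R = |S|/f, such that every user can recover its demanded file from its cache and the transmissions. -/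
open Finset

/-!
Coded packet `s` is the sum of the demanded subfiles at the cells of `P` carrying `s`. If user `k`
misses subfile `j` because `P j k = s`, the Blackburn property puts every other cell carrying `s` in
a row that `k` caches, so `k` recomputes all other summands from its cache and subtracts them.
-/

section

variable {K f N : ℕ} {G : Type*} [AddCommGroup G]

def codedPacket (P : Fin f → Fin K → Option ℕ) (W : Fin N → Fin f → G) (D : Fin K → Fin N)
    (s : ℕ) : G :=
  ∑ jk : Fin f × Fin K, if P jk.1 jk.2 = some s then W (D jk.2) jk.1 else 0

def userCache (P : Fin f → Fin K → Option ℕ) (k : Fin K) (W : Fin N → Fin f → G) :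
    Fin N → Fin f → G :=
  fun i j => if P j k = none then W i j else 0

def pdaDecoder (S : Finset ℕ) (P : Fin f → Fin K → Option ℕ) (k : Fin K) (D : Fin K → Fin N)
    (cache : Fin N → Fin f → G) (pkt : {s // s ∈ S} → G) (j : Fin f) : G :=
  match P j k with
  | none => cache (D k) j
  | some s => (if hs : s ∈ S then pkt ⟨s, hs⟩ else 0) - codedPacket P cache D s

theorem codedPacket_sub_codedPacket_userCache {P : Fin f → Fin K → Option ℕ} {j : Fin f}
    {k : Fin K} {s : ℕ} (hjk : P j k = some s)
    (hstar : ∀ j' k', (j', k') ≠ (j, k) → P j' k' = some s → P j' k = none)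
    (W : Fin N → Fin f → G) (D : Fin K → Fin N) :
    codedPacket P W D s - codedPacket P (userCache P k W) D s = W (D k) j := by
  rw [codedPacket, codedPacket, ← sum_sub_distrib, sum_eq_single (j, k)]
  · simp [userCache, hjk]
  · rintro ⟨j', k'⟩ - hne
    by_cases hs : P j' k' = some s
    · simp [userCache, hs, hstar j' k' hne hs]
    · simp [hs]
  · simp

theorem IsPDA.eq_none_of_eq_some {P : Fin f → Fin K → Option ℕ} {Z : ℕ} {S : Finset ℕ}
    (hP : IsPDA P Z S) {j j' : Fin f} {k k' : Fin K} {s : ℕ} (hne : (j', k') ≠ (j, k))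
    (h' : P j' k' = some s) (h : P j k = some s) : P j' k = none :=
  (hP.2.2.2 j' k' j k s hne h' h).1

end

/-- **Rate of a lifted caching scheme.** Given a `(K, f, Z, S)` PDA `P`,
there is a coded caching scheme for `K` users and `N` files (each split into `f`
subfiles, with values in an additive group `G`): user `k` caches exactly the subfiles
`W i j` with `P j k = ∗` (so `M/N = Z/f`), and for every demand vector `D` and every
choice of files, the server's `|S|` coded packets (one per integer, giving rate
`R = |S|/f`), each the XOR/sum of the demanded subfiles at the cells carrying that
integer, together with the cache contents, allow every user `k` to decode its full
demanded file `W (D k)`. -/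
theorem stmt_19 {K f Z N : ℕ} (S : Finset ℕ) (P : Fin f → Fin K → Option ℕ)
    (hP : IsPDA P Z S) (G : Type*) [AddCommGroup G] :
    ∃ dec : Fin K →                 -- the user
        (Fin K → Fin N) →           -- the demand vector
        (Fin N → Fin f → G) →       -- the user's cache contents (0 outside stars)
        ({s // s ∈ S} → G) →        -- the |S| transmitted coded packets
        (Fin f → G),                -- the decoded demanded file
      ∀ (W : Fin N → Fin f → G) (D : Fin K → Fin N) (k : Fin K),
        dec k D
          (fun i j => if P j k = none then W i j else 0)
          (fun s => ∑ jk : Fin f × Fin K,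
            if P jk.1 jk.2 = some s.1 then W (D jk.2) jk.1 else 0)
          = W (D k) := by
  refine ⟨pdaDecoder S P, fun W D k => funext fun j => ?_⟩
  rcases hjk : P j k with _ | s
  · simp [pdaDecoder, hjk]
  · simp only [pdaDecoder, hjk, dif_pos (hP.2.2.1 j k s hjk)]
    exact codedPacket_sub_codedPacket_userCache hjk
      (fun _ _ hne h' => hP.eq_none_of_eq_some hne h' hjk) W D
end
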